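/- arXiv:2107.06045 — 4 statements merged into one kernel-verified Lean document; each statement's English description precedes it below -/
import Mathlib

section
/- If an LTLf formula φ is provable (⊢ φ), then φ is valid (⊨ φ), i.e., every finite nonempty trace K^n assigns truth to φ at every time step 1 ≤ i ≤ n. -/
/-- Syntax of LTLf: variables, falsum, implication, (strong) next, weak until. -/
inductive LTLf (Var : Type) : Type
  | var : Var → LTLf Var
  | bot : LTLf Var
  | imp : LTLf Var → LTLf Var → LTLf Var
  | next : LTLf Var → LTLf Var
  | wuntil : LTLf Var → LTLf Var → LTLf Var
  deriving DecidableEq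

namespace LTLf

variable {Var : Type}

/-- ¬φ := φ ⇒ ⊥ -/
def neg (φ : LTLf Var) : LTLf Var := imp φ bot
/-- ⊤ := ¬⊥ -/
def top : LTLf Var := neg bot
/-- φ ∨ ψ := ¬φ ⇒ ψ -/
def disj (φ ψ : LTLf Var) : LTLf Var := imp (neg φ) ψ
/-- φ ∧ ψ := ¬(¬φ ∨ ¬ψ) -/
def conj (φ ψ : LTLf Var) : LTLf Var := neg (disj (neg φ) (neg ψ))
/-- φ ⟺ ψ := (φ ⇒ ψ) ∧ (ψ ⇒ φ) -/
def liff (φ ψ : LTLf Var) : LTLf Var := conj (imp φ ψ) (imp ψ φ)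
/-- end := ¬X⊤ -/
def endF : LTLf Var := neg (next top)
/-- weak next: •φ := ¬X¬φ -/
def wnext (φ : LTLf Var) : LTLf Var := neg (next (neg φ))
/-- □φ := φ W ⊥ -/
def always (φ : LTLf Var) : LTLf Var := wuntil φ bot
/-- ◇φ := ¬□¬φ -/
def ev (φ : LTLf Var) : LTLf Var := neg (always (neg φ))

/-- A propositional valuation: an assignment of booleans to formulae (treating
variables, next- and weak-until-formulae as opaque atoms) that respects ⊥ and ⇒. -/
def IsPropValuation (f : LTLf Var → Bool) : Prop :=
  f bot = false ∧ ∀ φ ψ : LTLf Var, f (imp φ ψ) = (!(f φ) || f ψ)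

/-- A propositional tautology: true under every propositional valuation. -/
def Tautology (φ : LTLf Var) : Prop :=
  ∀ f : LTLf Var → Bool, IsPropValuation f → f φ = true

/-- The LTLf proof system, with hypotheses drawn from a set `F`:
`F ⊢ φ` means `⊢ φ` is derivable assuming `⊢ ψ` for each `ψ ∈ F`. -/
inductive PrvFrom : Set (LTLf Var) → LTLf Var → Prop
  /-- assumption -/
  | hyp {F φ} : φ ∈ F → PrvFrom F φ
  /-- (Taut) all propositional tautologies -/
  | taut {F φ} : Tautology φ → PrvFrom F φ
  /-- modus ponens (propositional reasoning) -/
  | mp {F φ ψ} : PrvFrom F (imp φ ψ) → PrvFrom F φ → PrvFrom F ψ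
  /-- (WkNextDistr) ⊢ •(φ⇒ψ) ⟺ (•φ ⇒ •ψ) -/
  | wkNextDistr (F) (φ ψ) :
      PrvFrom F (liff (wnext (imp φ ψ)) (imp (wnext φ) (wnext ψ)))
  /-- (EndNextContra) ⊢ end ⇒ ¬Xφ -/
  | endNextContra (F) (φ) : PrvFrom F (imp endF (neg (next φ)))
  /-- (Finite) ⊢ ◇end -/
  | fin (F) : PrvFrom F (ev endF)
  /-- (WkUntilUnroll) ⊢ φ W ψ ⟺ ψ ∨ (φ ∧ •(φ W ψ)) -/
  | wkUntilUnroll (F) (φ ψ) :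
      PrvFrom F (liff (wuntil φ ψ) (disj ψ (conj φ (wnext (wuntil φ ψ)))))
  /-- (WkNextStep) from ⊢ φ infer ⊢ •φ -/
  | wkNextStep {F φ} : PrvFrom F φ → PrvFrom F (wnext φ)
  /-- (Induction) from ⊢ φ⇒ψ and ⊢ φ⇒•φ infer ⊢ φ⇒□ψ -/
  | ind {F φ ψ} :
      PrvFrom F (imp φ ψ) → PrvFrom F (imp φ (wnext φ)) → PrvFrom F (imp φ (always ψ))

/-- `⊢ φ`: provability with no hypotheses. -/
def Prv (φ : LTLf Var) : Prop := PrvFrom ∅ φ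

/-! ## Semantics: finite nonempty traces.
A trace of length `n ≥ 1` is given by valuations `η i : Var → Bool` for `1 ≤ i ≤ n`. -/

/-- `Holds η n φ i` says that `K^n_i(φ) = t` in the trace `(η 1, …, η n)`. -/
def Holds (η : ℕ → Var → Bool) (n : ℕ) : LTLf Var → ℕ → Prop
  | var v, i => η i v = true
  | bot, _ => False
  | imp φ ψ, i => Holds η n φ i → Holds η n ψ i
  | next φ, i => i < n ∧ Holds η n φ (i + 1)
  | wuntil φ ψ, i =>
      (∀ j, i ≤ j → j ≤ n → Holds η n φ j) ∨
      (∃ k, i ≤ k ∧ k ≤ n ∧ Holds η n ψ k ∧ ∀ j, i ≤ j → j < k → Holds η n φ j)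

/-- `K^n ⊨ φ`: φ holds at every time step `1 ≤ i ≤ n`. -/
def Models (η : ℕ → Var → Bool) (n : ℕ) (φ : LTLf Var) : Prop :=
  ∀ i, 1 ≤ i → i ≤ n → Holds η n φ i

/-- `⊨ φ`: φ is valid, i.e., satisfied by every finite nonempty trace. -/
def Valid (φ : LTLf Var) : Prop :=
  ∀ (n : ℕ), 1 ≤ n → ∀ η : ℕ → Var → Bool, Models η n φ

/-- `F ⊨ φ`: φ is valid under the assumptions `F`. -/
def ValidUnder (F : Set (LTLf Var)) (φ : LTLf Var) : Prop :=
  ∀ (n : ℕ), 1 ≤ n → ∀ η : ℕ → Var → Bool,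
    (∀ ψ ∈ F, Models η n ψ) → Models η n φ

/-! Induction on derivations from hypotheses: every axiom holds at every position of every
finite trace, and every rule preserves this. For (Taut), truth at a fixed position is itself a
propositional valuation; for (Induction), `φ ⇒ •φ` carries `φ` forward position by position to
the end of the trace. -/

section Semantics

variable {η : ℕ → Var → Bool} {n i : ℕ} {φ ψ : LTLf Var}

theorem holds_neg : Holds η n (neg φ) i ↔ ¬Holds η n φ i := Iff.rfl

theorem holds_wnext : Holds η n (wnext φ) i ↔ (i < n → Holds η n φ (i + 1)) :=
  not_and_not_right

theorem holds_endF : Holds η n (endF : LTLf Var) i ↔ n ≤ i := by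
  simp only [endF, top, neg, Holds, imp_self, and_true, imp_false, not_lt]

theorem holds_disj : Holds η n (disj φ ψ) i ↔ Holds η n φ i ∨ Holds η n ψ i :=
  or_iff_not_imp_left.symm

theorem holds_conj : Holds η n (conj φ ψ) i ↔ Holds η n φ i ∧ Holds η n ψ i := by
  simp only [conj, holds_neg, holds_disj, not_or, not_not]

theorem holds_liff : Holds η n (liff φ ψ) i ↔ (Holds η n φ i ↔ Holds η n ψ i) :=
  holds_conj.trans iff_iff_implies_and_implies.symm

theorem holds_always : Holds η n (always φ) i ↔ ∀ j, i ≤ j → j ≤ n → Holds η n φ j := by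
  simp only [always, Holds, false_and, and_false, exists_false, or_false]

theorem holds_wuntil_iff_unroll (hin : i ≤ n) :
    Holds η n (wuntil φ ψ) i ↔
      Holds η n ψ i ∨ (Holds η n φ i ∧ (i < n → Holds η n (wuntil φ ψ) (i + 1))) := by
  simp only [Holds]
  constructor
  · rintro (hall | ⟨k, hik, hkn, hψ, hφ⟩)
    · exact .inr ⟨hall i le_rfl hin, fun _ => .inl fun j hj => hall j (by omega)⟩
    · rcases hik.eq_or_lt with rfl | hik
      · exact .inl hψ
      · exact .inr ⟨hφ i le_rfl hik, fun _ => .inr ⟨k, hik, hkn, hψ, fun j hj => hφ j (by omega)⟩⟩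
  · rintro (hψ | ⟨hφi, hnext⟩)
    · exact .inr ⟨i, le_rfl, hin, hψ, fun j hj hji => absurd hj (by omega)⟩
    have extend : ∀ j, i ≤ j → (i + 1 ≤ j → Holds η n φ j) → Holds η n φ j :=
      fun j hij h => hij.eq_or_lt.elim (· ▸ hφi) h
    rcases hin.lt_or_eq with hlt | rfl
    · rcases hnext hlt with hall | ⟨k, hik, hkn, hψ, hφ⟩
      · exact .inl fun j hij hjn => extend j hij (hall j · hjn)
      · exact .inr ⟨k, by omega, hkn, hψ, fun j hij hjk => extend j hij (hφ j · hjk)⟩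
    · exact .inl fun j hij hjn => le_antisymm hjn hij ▸ hφi

theorem holds_of_le_of_step (hφ : Holds η n φ i)
    (step : ∀ j, i ≤ j → j < n → Holds η n φ j → Holds η n φ (j + 1)) :
    ∀ j, i ≤ j → j ≤ n → Holds η n φ j := by
  intro j hij hjn
  induction j, hij using Nat.le_induction with
  | base => exact hφ
  | succ k hik ih => exact step k hik hjn (ih (by omega))

open Classical in
theorem isPropValuation_holds : IsPropValuation fun φ : LTLf Var => decide (Holds η n φ i) :=
  ⟨decide_eq_false id, fun φ ψ => by
    by_cases hφ : Holds η n φ i <;> simp [Holds, hφ]⟩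

open Classical in
theorem Tautology.holds (h : Tautology φ) : Holds η n φ i :=
  of_decide_eq_true (h _ isPropValuation_holds)

end Semantics

theorem validUnder_of_prvFrom {F : Set (LTLf Var)} {φ : LTLf Var} (h : PrvFrom F φ) :
    ValidUnder F φ := by
  induction h with
  | hyp hφ => exact fun n _ η hF => hF _ hφ
  | taut ht => exact fun _ _ _ _ _ _ _ => ht.holds
  | mp _ _ ihImp ihφ =>
    exact fun n hn η hF i hi hin => ihImp n hn η hF i hi hin (ihφ n hn η hF i hi hin)
  | wkNextDistr =>
    intro _ _ _ _ _ _ _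
    simp only [holds_liff, holds_wnext, Holds]
    tauto
  | endNextContra =>
    intro _ _ _ _ _ _ _ hend hnext
    exact (holds_endF.mp hend).not_gt hnext.1
  | fin =>
    intro n _ η _ i _ hin
    rw [ev, holds_neg, holds_always]
    exact fun hall => hall n hin le_rfl (holds_endF.mpr le_rfl)
  | wkUntilUnroll =>
    intro _ _ _ _ _ _ hin
    rw [holds_liff, holds_disj, holds_conj, holds_wnext]
    exact holds_wuntil_iff_unroll hin
  | wkNextStep _ ih =>
    exact fun n hn η hF i hi _ => holds_wnext.mpr fun hlt => ih n hn η hF (i + 1) (by omega) hlt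
  | ind _ _ ihφψ ihStep =>
    intro n hn η hF i hi _ hφ
    rw [holds_always]
    have hφ_later := holds_of_le_of_step hφ fun j hij hjn hφj =>
      holds_wnext.mp (ihStep n hn η hF j (by omega) hjn.le hφj) hjn
    exact fun j hij hjn => ihφψ n hn η hF j (by omega) hjn (hφ_later j hij hjn)

/-- Soundness of LTLf: provable formulae are valid. -/
theorem ltlf_soundness {Var : Type} (φ : LTLf Var) (h : Prv φ) : Valid φ :=
  fun n hn η => validUnder_of_prvFrom h n hn η fun _ hψ => absurd hψ (Set.notMem_empty _)

end LTLf
end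

section
/- (Semantic deduction theorem) For any set F of LTLf formulas and formulas φ, ψ: F ∪ {φ} ⊨ ψ if and only if F ⊨ □φ ⇒ ψ. -/
namespace LTLf

variable {Var : Type}

theorem _root_.Nat.forall_ge_add_iff {Q : ℕ → Prop} {a d : ℕ} :
    (∀ j, a + d ≤ j → Q j) ↔ ∀ j, a ≤ j → Q (j + d) := by
  refine ⟨fun h j hj => h _ (by omega), fun h j hj => ?_⟩
  obtain ⟨j, rfl⟩ := Nat.exists_eq_add_of_le' (le_of_add_le_right hj)
  exact h j (by omega)

theorem _root_.Nat.exists_ge_add_iff {Q : ℕ → Prop} {a d : ℕ} :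
    (∃ k, a + d ≤ k ∧ Q k) ↔ ∃ k, a ≤ k ∧ Q (k + d) := by
  refine ⟨fun ⟨k, hk, hQ⟩ => ?_, fun ⟨k, hk, hQ⟩ => ⟨k + d, by omega, hQ⟩⟩
  obtain ⟨k, rfl⟩ := Nat.exists_eq_add_of_le' (le_of_add_le_right hk)
  exact ⟨k, by omega, hQ⟩

theorem holds_shift (η : ℕ → Var → Bool) (n d : ℕ) (χ : LTLf Var) (i : ℕ) :
    Holds (fun j => η (j + d)) n χ i ↔ Holds η (n + d) χ (i + d) := by
  induction χ generalizing i with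
  | var v => rfl
  | bot => rfl
  | imp φ ψ ihφ ihψ => simp only [Holds, ihφ, ihψ]
  | next φ ih => simp only [Holds, ih, add_right_comm i 1 d, add_lt_add_iff_right]
  | wuntil φ ψ ihφ ihψ =>
    simp only [Holds, ihφ, ihψ, Nat.forall_ge_add_iff, Nat.exists_ge_add_iff,
      add_le_add_iff_right, add_lt_add_iff_right]

theorem models_shift_iff {η : ℕ → Var → Bool} {n d : ℕ} {χ : LTLf Var} :
    Models (fun j => η (j + d)) n χ ↔ ∀ j, d + 1 ≤ j → j ≤ n + d → Holds η (n + d) χ j := by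
  rw [add_comm d 1, Nat.forall_ge_add_iff]
  simp only [Models, holds_shift, add_le_add_iff_right]

theorem holds_always_iff {η : ℕ → Var → Bool} {n : ℕ} {φ : LTLf Var} {i : ℕ} :
    Holds η n (always φ) i ↔ ∀ j, i ≤ j → j ≤ n → Holds η n φ j := by
  simp [always, Holds]

/-- Semantic deduction theorem: `F ∪ {φ} ⊨ ψ` iff `F ⊨ □φ ⇒ ψ`. -/
theorem ltlf_semantic_deduction {Var : Type} (F : Set (LTLf Var)) (φ ψ : LTLf Var) :
    ValidUnder (F ∪ {φ}) ψ ↔ ValidUnder F (imp (always φ) ψ) := by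
  constructor
  · intro h n hn η hF i hi hin hφ
    obtain ⟨d, rfl⟩ := Nat.exists_eq_add_of_le' hi
    obtain ⟨m, rfl⟩ := Nat.exists_eq_add_of_le' (by omega : d ≤ n)
    -- `□φ` at time `d + 1` makes the suffix starting there a model of `F ∪ {φ}`.
    have hsuffix : ∀ χ ∈ F ∪ {φ}, Models (fun j => η (j + d)) m χ := by
      rintro χ (hχ | rfl) <;> rw [models_shift_iff] <;> intro j hj hjn
      · exact hF χ hχ j (by omega) hjn
      · exact holds_always_iff.mp hφ j hj hjn
    rw [add_comm d 1, ← holds_shift]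
    exact h m (by omega) _ hsuffix 1 le_rfl (by omega)
  · intro h n hn η hF i hi hin
    have hφ : Holds η n (always φ) i :=
      holds_always_iff.mpr fun j hj hjn => hF φ (Or.inr rfl) j (by omega) hjn
    exact h n hn η (fun χ hχ => hF χ (Or.inl hχ)) i hi hin hφ

end LTLf
end

section
/- (Deduction theorem) For any set F of LTLf formulas and formulas φ, ψ: F ∪ {φ} ⊢ ψ if and only if F ⊢ □φ ⇒ ψ. -/
namespace LTLf

variable {Var : Type}

/-! Every derivation of `ψ` from `F ∪ {φ}` is replayed relative to `□φ`, by induction on the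
derivation. Assumptions and axioms pass to `□φ ⇒ ψ` by weakening and `φ` itself by `□φ ⇒ φ`; modus
ponens commutes with `□φ ⇒ -`; the next-step rule survives because `□φ ⇒ •□φ`; and the induction
rule, applied to `□φ ∧ χ` instead of `χ`, stays sound because `□φ` is its own invariant. The
converse needs only necessitation `⊢ φ ⟹ ⊢ □φ`, an instance of the induction rule with `⊤`. -/

theorem IsPropValuation.apply_imp {f : LTLf Var → Bool} (hf : IsPropValuation f)
    (φ ψ : LTLf Var) : f (imp φ ψ) = (!f φ || f ψ) :=
  hf.2 φ ψ

theorem IsPropValuation.apply_neg {f : LTLf Var → Bool} (hf : IsPropValuation f)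
    (φ : LTLf Var) : f (neg φ) = !f φ := by
  simp [neg, hf.apply_imp, hf.1]

theorem IsPropValuation.apply_disj {f : LTLf Var → Bool} (hf : IsPropValuation f)
    (φ ψ : LTLf Var) : f (disj φ ψ) = (f φ || f ψ) := by
  simp [disj, hf.apply_imp, hf.apply_neg]

theorem IsPropValuation.apply_conj {f : LTLf Var → Bool} (hf : IsPropValuation f)
    (φ ψ : LTLf Var) : f (conj φ ψ) = (f φ && f ψ) := by
  simp [conj, hf.apply_disj, hf.apply_neg]

theorem tautology_top : Tautology (top : LTLf Var) := fun f hf => by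
  simp [top, hf.apply_neg, hf.1]

theorem tautology_K (A B : LTLf Var) : Tautology (imp A (imp B A)) := fun f hf => by
  simp only [hf.apply_imp]
  cases f A <;> cases f B <;> rfl

theorem tautology_S (A B C : LTLf Var) :
    Tautology (imp (imp A (imp B C)) (imp (imp A B) (imp A C))) := fun f hf => by
  simp only [hf.apply_imp]
  cases f A <;> cases f B <;> cases f C <;> rfl

theorem tautology_liff_imp (A B : LTLf Var) : Tautology (imp (liff A B) (imp A B)) :=
  fun f hf => by
  simp only [liff, hf.apply_conj, hf.apply_imp]
  cases f A <;> cases f B <;> rfl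

theorem tautology_bot_disj (A : LTLf Var) : Tautology (imp (disj bot A) A) := fun f hf => by
  simp only [hf.apply_imp, hf.apply_disj, hf.1]
  cases f A <;> rfl

theorem tautology_imp_conj (A B : LTLf Var) : Tautology (imp A (imp B (conj A B))) :=
  fun f hf => by
  simp only [hf.apply_imp, hf.apply_conj]
  cases f A <;> cases f B <;> rfl

theorem tautology_conj_left (A B : LTLf Var) : Tautology (imp (conj A B) A) := fun f hf => by
  simp only [hf.apply_imp, hf.apply_conj]
  cases f A <;> cases f B <;> rfl

theorem tautology_conj_right (A B : LTLf Var) : Tautology (imp (conj A B) B) := fun f hf => by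
  simp only [hf.apply_imp, hf.apply_conj]
  cases f A <;> cases f B <;> rfl

theorem tautology_curry (A B C : LTLf Var) :
    Tautology (imp (imp (conj A B) C) (imp A (imp B C))) := fun f hf => by
  simp only [hf.apply_imp, hf.apply_conj]
  cases f A <;> cases f B <;> cases f C <;> rfl

theorem tautology_uncurry (A B C : LTLf Var) :
    Tautology (imp (imp A (imp B C)) (imp (conj A B) C)) := fun f hf => by
  simp only [hf.apply_imp, hf.apply_conj]
  cases f A <;> cases f B <;> cases f C <;> rfl

namespace PrvFrom

variable {F : Set (LTLf Var)} {A B C : LTLf Var}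

theorem mono {G : Set (LTLf Var)} (h : PrvFrom F A) (hFG : F ⊆ G) : PrvFrom G A := by
  induction h with
  | hyp hm => exact hyp (hFG hm)
  | taut ht => exact taut ht
  | mp _ _ ih₁ ih₂ => exact mp ih₁ ih₂
  | wkNextDistr A B => exact wkNextDistr G A B
  | endNextContra A => exact endNextContra G A
  | fin => exact fin G
  | wkUntilUnroll A B => exact wkUntilUnroll G A B
  | wkNextStep _ ih => exact wkNextStep ih
  | ind _ _ ih₁ ih₂ => exact ind ih₁ ih₂

theorem of_tautology_imp (hAB : Tautology (imp A B)) (hA : PrvFrom F A) : PrvFrom F B :=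
  mp (taut hAB) hA

theorem imp_intro (hB : PrvFrom F B) : PrvFrom F (imp A B) :=
  of_tautology_imp (tautology_K B A) hB

theorem imp_mp (hABC : PrvFrom F (imp A (imp B C))) (hAB : PrvFrom F (imp A B)) :
    PrvFrom F (imp A C) :=
  mp (of_tautology_imp (tautology_S A B C) hABC) hAB

theorem imp_trans (hAB : PrvFrom F (imp A B)) (hBC : PrvFrom F (imp B C)) :
    PrvFrom F (imp A C) :=
  imp_mp (imp_intro hBC) hAB

theorem imp_of_liff (h : PrvFrom F (liff A B)) : PrvFrom F (imp A B) :=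
  of_tautology_imp (tautology_liff_imp A B) h

theorem wnext_imp_wnext (h : PrvFrom F (imp A B)) : PrvFrom F (imp (wnext A) (wnext B)) :=
  mp (imp_of_liff (wkNextDistr F A B)) (wkNextStep h)

theorem always_imp_conj (F : Set (LTLf Var)) (A : LTLf Var) :
    PrvFrom F (imp (always A) (conj A (wnext (always A)))) :=
  imp_trans (imp_of_liff (wkUntilUnroll F A bot)) (taut (tautology_bot_disj _))

theorem always_imp_self (F : Set (LTLf Var)) (A : LTLf Var) : PrvFrom F (imp (always A) A) :=
  imp_trans (always_imp_conj F A) (taut (tautology_conj_left _ _))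

theorem always_imp_wnext_always (F : Set (LTLf Var)) (A : LTLf Var) :
    PrvFrom F (imp (always A) (wnext (always A))) :=
  imp_trans (always_imp_conj F A) (taut (tautology_conj_right _ _))

theorem always_intro (h : PrvFrom F A) : PrvFrom F (always A) :=
  mp (ind (imp_intro h) (imp_intro (wkNextStep (taut tautology_top)))) (taut tautology_top)

theorem ind_under_always (hψ : PrvFrom F (imp (always A) (imp B C)))
    (hstep : PrvFrom F (imp (always A) (imp B (wnext B)))) :
    PrvFrom F (imp (always A) (imp B (always C))) := by
  set θ := conj (always A) B
  have hθ_always : PrvFrom F (imp θ (always A)) := taut (tautology_conj_left _ _)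
  have hθ_C : PrvFrom F (imp θ C) := of_tautology_imp (tautology_uncurry _ _ _) hψ
  have hθ_wnext_B : PrvFrom F (imp θ (wnext B)) :=
    of_tautology_imp (tautology_uncurry _ _ _) hstep
  have hθ_wnext_always : PrvFrom F (imp θ (wnext (always A))) :=
    imp_trans hθ_always (always_imp_wnext_always F A)
  have hwnext_pair : PrvFrom F (imp (wnext (always A)) (imp (wnext B) (wnext θ))) :=
    imp_trans (wnext_imp_wnext (taut (tautology_imp_conj _ _))) (imp_of_liff (wkNextDistr F _ _))
  have hθ_step : PrvFrom F (imp θ (wnext θ)) :=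
    imp_mp (imp_mp (imp_intro hwnext_pair) hθ_wnext_always) hθ_wnext_B
  exact of_tautology_imp (tautology_curry _ _ _) (ind hθ_C hθ_step)

theorem always_imp_of_diff_singleton {G : Set (LTLf Var)} (h : PrvFrom G B) :
    PrvFrom (G \ {A}) (imp (always A) B) := by
  induction h with
  | @hyp χ hχ =>
    by_cases hχA : χ = A
    · subst hχA
      exact always_imp_self _ _
    · exact imp_intro (hyp ⟨hχ, hχA⟩)
  | taut ht => exact imp_intro (taut ht)
  | mp _ _ ih₁ ih₂ => exact imp_mp ih₁ ih₂
  | wkNextDistr B C => exact imp_intro (wkNextDistr _ B C)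
  | endNextContra B => exact imp_intro (endNextContra _ B)
  | fin => exact imp_intro (fin _)
  | wkUntilUnroll B C => exact imp_intro (wkUntilUnroll _ B C)
  | wkNextStep _ ih => exact imp_trans (always_imp_wnext_always _ A) (wnext_imp_wnext ih)
  | ind _ _ ih₁ ih₂ => exact ind_under_always ih₁ ih₂

end PrvFrom

/-- Deduction theorem: `F ∪ {φ} ⊢ ψ` iff `F ⊢ □φ ⇒ ψ`. -/
theorem ltlf_deduction {Var : Type} (F : Set (LTLf Var)) (φ ψ : LTLf Var) :
    PrvFrom (F ∪ {φ}) ψ ↔ PrvFrom F (imp (always φ) ψ) := by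
  constructor
  · intro h
    exact h.always_imp_of_diff_singleton.mono (by simp)
  · intro h
    have hφ : PrvFrom (F ∪ {φ}) (always φ) := (PrvFrom.hyp (by simp)).always_intro
    exact (h.mono Set.subset_union_left).mp hφ

end LTLf
end

section
/- (Consistent assignments are completions) For every consistent PNP P and every Q ∈ assigns(F_P): if ⊢ P̂ ⇒ Q̂, then Q ∈ comps(P). -/
namespace LTLf

variable {Var : Type}

/-! ## Positive-negative pairs (PNPs) -/

/-- A positive-negative pair: two finite sets of formulae. -/
structure PNP (Var : Type) where
  pos : Finset (LTLf Var)
  neg : Finset (LTLf Var)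

/-- Conjunction of a list of formulae. -/
def conjList : List (LTLf Var) → LTLf Var
  | [] => top
  | φ :: rest => conj φ (conjList rest)

/-- Disjunction of a list of formulae. -/
def disjList : List (LTLf Var) → LTLf Var
  | [] => bot
  | φ :: rest => disj φ (disjList rest)

variable [DecidableEq Var]

/-- Literal interpretation `P̂`: conjunction of all of `pos P` and of the
negations of all of `neg P`. -/
noncomputable def PNP.interp (P : PNP Var) : LTLf Var :=
  conjList (P.pos.toList ++ P.neg.toList.map LTLf.neg)

/-- `P` is consistent iff it is not the case that `⊢ ¬P̂`. -/
def PNP.Consistent (P : PNP Var) : Prop := ¬ Prv (LTLf.neg P.interp)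

/-- `F_P := pos(P) ∪ neg(P)`. -/
def PNP.forms (P : PNP Var) : Finset (LTLf Var) := P.pos ∪ P.neg

/-- Helper for σ: `{φ | Xφ ∈ S}` pointwise. -/
def nextArgs : LTLf Var → Finset (LTLf Var)
  | next φ => {φ}
  | _ => ∅

/-- Helper for σ⁺₂: keep `φ W ψ` when `ψ` is in the given (negative) set. -/
def wPosStep (N : Finset (LTLf Var)) : LTLf Var → Finset (LTLf Var)
  | wuntil φ ψ => if ψ ∈ N then {wuntil φ ψ} else ∅
  | _ => ∅

/-- Helper for σ⁻₄: keep `φ W ψ` when `φ` is in the given (positive) set. -/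
def wNegStep (Pos : Finset (LTLf Var)) : LTLf Var → Finset (LTLf Var)
  | wuntil φ ψ => if φ ∈ Pos then {wuntil φ ψ} else ∅
  | _ => ∅

/-- The step function σ. -/
def PNP.step (P : PNP Var) : PNP Var :=
  ⟨P.pos.biUnion nextArgs ∪ P.pos.biUnion (wPosStep P.neg),
   P.neg.biUnion nextArgs ∪ P.neg.biUnion (wNegStep P.pos)⟩

/-- The closure function τ on formulae. -/
def tau : LTLf Var → Finset (LTLf Var)
  | var v => {var v}
  | bot => {bot}
  | imp φ ψ => insert (imp φ ψ) (tau φ ∪ tau ψ)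
  | next φ => {next φ}
  | wuntil φ ψ => insert (wuntil φ ψ) (tau φ ∪ tau ψ)

/-- τ on finite sets of formulae. -/
def tauSet (F : Finset (LTLf Var)) : Finset (LTLf Var) := F.biUnion tau

/-- τ(P) := τ(F_P). -/
def PNP.tauP (P : PNP Var) : Finset (LTLf Var) := tauSet P.forms

/-- `P ≼ Q`. -/
def PNP.Extends (P Q : PNP Var) : Prop := P.pos ⊆ Q.pos ∧ P.neg ⊆ Q.neg

/-- `assigns(F)`: PNPs whose formulae are exactly `τ(F)`. -/
def Assigns (F : Finset (LTLf Var)) : Set (PNP Var) :=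
  {P | P.forms = tauSet F}

/-- `comps(P)`: consistent completions of `P`. -/
def Comps (P : PNP Var) : Set (PNP Var) :=
  {Q | Q.forms = P.tauP ∧ P.Extends Q ∧ Q.Consistent}

/-- `assigns(F)` as a finite set. -/
noncomputable def assignsF (F : Finset (LTLf Var)) : Finset (PNP Var) := by
  classical
  exact (((tauSet F).powerset ×ˢ (tauSet F).powerset).filter
      (fun p => p.1 ∪ p.2 = tauSet F)).image (fun p => ⟨p.1, p.2⟩)

/-- `comps(P)` as a finite set. -/
noncomputable def compsF (P : PNP Var) : Finset (PNP Var) := by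
  classical
  exact (assignsF P.forms).filter (fun Q => P.Extends Q ∧ Q.Consistent)

end LTLf

/-! Since `Q` assigns every formula of `τ(F_P) ⊇ F_P`, `P ≼ Q` can only fail if some formula is
positive in one of `P`, `Q` and negative in the other. Then `P̂ ∧ Q̂` is propositionally
unsatisfiable, so `⊢ P̂ ⇒ Q̂` yields `⊢ ¬P̂` by (Taut), against consistency of `P`. Likewise
`⊢ ¬Q̂` together with `⊢ P̂ ⇒ Q̂` would give `⊢ ¬P̂`. -/

namespace LTLf

variable {Var : Type}

namespace IsPropValuation

variable {f : LTLf Var → Bool}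

theorem map_neg (hf : IsPropValuation f) (φ : LTLf Var) : f (neg φ) = !f φ := by
  simp [neg, hf.2, hf.1]

theorem map_conj (hf : IsPropValuation f) (φ ψ : LTLf Var) :
    f (conj φ ψ) = (f φ && f ψ) := by
  simp only [conj, disj, hf.map_neg, hf.2]
  cases f φ <;> cases f ψ <;> rfl

theorem map_conjList (hf : IsPropValuation f) (L : List (LTLf Var)) :
    f (conjList L) = L.all f := by
  induction L with
  | nil => simp [conjList, top, hf.map_neg, hf.1]
  | cons φ L ih => simp [conjList, hf.map_conj, ih]

theorem map_interp_eq_true_iff [DecidableEq Var] (hf : IsPropValuation f) (P : PNP Var) :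
    f P.interp = true ↔ (∀ φ ∈ P.pos, f φ = true) ∧ ∀ φ ∈ P.neg, f φ = false := by
  simp [PNP.interp, hf.map_conjList, hf.map_neg]

end IsPropValuation

namespace PrvFrom

variable {F : Set (LTLf Var)} {φ ψ : LTLf Var}

theorem neg_of_imp_of_neg (h : PrvFrom F (imp φ ψ)) (hψ : PrvFrom F (neg ψ)) :
    PrvFrom F (neg φ) := by
  refine .mp (.mp (.taut fun f hf => ?_) h) hψ
  simp only [hf.2, hf.map_neg]
  cases f φ <;> cases f ψ <;> rfl

theorem exists_valuation_of_imp (hφ : ¬PrvFrom F (neg φ)) (h : PrvFrom F (imp φ ψ)) :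
    ∃ f, IsPropValuation f ∧ f φ = true ∧ f ψ = true := by
  by_contra! hnone
  refine hφ (.mp (.taut fun f hf => ?_) h)
  have hψ := hnone f hf
  simp only [hf.2, hf.map_neg]
  cases hfφ : f φ <;> simp_all

end PrvFrom

theorem subset_tauSet [DecidableEq Var] (F : Finset (LTLf Var)) : F ⊆ tauSet F := fun φ hφ =>
  Finset.mem_biUnion.mpr ⟨φ, hφ, by cases φ <;> simp [tau]⟩

theorem PNP.extends_of_map_interp [DecidableEq Var] {f : LTLf Var → Bool}
    (hf : IsPropValuation f) {P Q : PNP Var} (hP : f P.interp = true) (hQ : f Q.interp = true)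
    (hforms : P.forms ⊆ Q.forms) : P.Extends Q := by
  rw [hf.map_interp_eq_true_iff] at hP hQ
  have hmem : ∀ φ ∈ P.forms, φ ∈ Q.pos ∨ φ ∈ Q.neg := fun φ hφ =>
    Finset.mem_union.mp (hforms hφ)
  constructor
  · intro φ hφ
    refine (hmem φ (Finset.mem_union_left _ hφ)).resolve_right fun hφQ => ?_
    simpa [hP.1 φ hφ] using hQ.2 φ hφQ
  · intro φ hφ
    refine (hmem φ (Finset.mem_union_right _ hφ)).resolve_left fun hφQ => ?_
    simpa [hP.2 φ hφ] using hQ.1 φ hφQ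

/-- Consistent assignments are completions: for every consistent PNP `P` and
every `Q ∈ assigns(F_P)`, if ⊢ P̂ ⇒ Q̂ then `Q ∈ comps(P)`. -/
theorem ltlf_assigns_comps {Var : Type} [DecidableEq Var] (P Q : PNP Var)
    (hP : P.Consistent) (hQ : Q ∈ Assigns P.forms)
    (h : Prv (imp P.interp Q.interp)) : Q ∈ Comps P := by
  have hforms : Q.forms = P.tauP := hQ
  obtain ⟨f, hf, hPf, hQf⟩ := PrvFrom.exists_valuation_of_imp hP h
  have hext : P.Extends Q :=
    PNP.extends_of_map_interp hf hPf hQf (hforms ▸ subset_tauSet P.forms)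
  exact ⟨hforms, hext, fun hQc => hP (h.neg_of_imp_of_neg hQc)⟩

end LTLf
end
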